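/- arXiv:1902.07605 — 5 statements merged into one kernel-verified Lean document; each statement's English description precedes it below -/
import Mathlib

section
/- Fix an ambiguity set P and δ ∈ (0,1). Let (Ω, F, μ) be a probability space and let P*(ω) be a measurable random transition model, i.e., for each state–action pair (s,a), ω ↦ p*_{s,a}(ω) ∈ Δ^S is measurable. Suppose that for each (s,a), μ[{ω : p*_{s,a}(ω) ∈ P_{s,a}}] ≥ 1 − δ/(SA). Assume the event E = {ω : for every deterministic policy π, v̂_P^π ≤ v_{P*(ω)}^π componentwise} is measurable. Then μ[E] ≥ 1 − δ. (Lemma A.2: Bayesian safety of credible-region ambiguity sets.) -/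
open MeasureTheory

noncomputable section

/-- Inner product of two vectors in `ℝ^S`. -/
def dot {S : ℕ} (p v : Fin S → ℝ) : ℝ := ∑ j, p j * v j

/-- Bellman operator for a deterministic policy `π` under transition probabilities `P`. -/
def Bellman {S A : ℕ} (r : Fin S → Fin A → ℝ) (γ : ℝ)
    (P : Fin S → Fin A → Fin S → ℝ) (π : Fin S → Fin A)
    (v : Fin S → ℝ) : Fin S → ℝ :=
  fun s => r s (π s) + γ * dot (P s (π s)) v

/-- Robust Bellman operator for a deterministic policy `π` under ambiguity set `Amb`. -/
def robustBellman {S A : ℕ} (r : Fin S → Fin A → ℝ) (γ : ℝ)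
    (Amb : Fin S → Fin A → Set (Fin S → ℝ)) (π : Fin S → Fin A)
    (v : Fin S → ℝ) : Fin S → ℝ :=
  fun s => r s (π s) + γ * sInf ((fun p => dot p v) '' Amb s (π s))

lemma robust_le_true {S A : ℕ} (hS : 0 < S)
    (r : Fin S → Fin A → ℝ) (γ : ℝ) (hγ0 : 0 ≤ γ) (hγ1 : γ < 1)
    (P : Fin S → Fin A → Fin S → ℝ) (hP : ∀ s a, P s a ∈ stdSimplex ℝ (Fin S))
    (Amb : Fin S → Fin A → Set (Fin S → ℝ))
    (hAmbCpt : ∀ s a, IsCompact (Amb s a))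
    (hmem : ∀ s a, P s a ∈ Amb s a)
    (π : Fin S → Fin A) (w u : Fin S → ℝ)
    (hw : w = robustBellman r γ Amb π w)
    (hu : u = Bellman r γ P π u) :
    ∀ s, w s ≤ u s := by
  have hne : (Finset.univ : Finset (Fin S)).Nonempty := by
    simpa [Finset.univ_nonempty_iff] using Fin.pos_iff_nonempty.mp hS
  obtain ⟨s₀, -, hs₀⟩ := Finset.exists_max_image Finset.univ (fun s => w s - u s) hne
  have hmax : ∀ s, w s - u s ≤ w s₀ - u s₀ := fun s => hs₀ s (Finset.mem_univ s)
  -- main estimate at s₀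
  have hdot : dot (P s₀ (π s₀)) w - dot (P s₀ (π s₀)) u ≤ w s₀ - u s₀ := by
    have hsum : dot (P s₀ (π s₀)) w - dot (P s₀ (π s₀)) u
        = ∑ j, P s₀ (π s₀) j * (w j - u j) := by
      simp [dot, mul_sub, Finset.sum_sub_distrib]
    rw [hsum]
    calc ∑ j, P s₀ (π s₀) j * (w j - u j)
        ≤ ∑ j, P s₀ (π s₀) j * (w s₀ - u s₀) := by
          apply Finset.sum_le_sum
          intro j _
          exact mul_le_mul_of_nonneg_left (hmax j) ((hP s₀ (π s₀)).1 j)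
      _ = (w s₀ - u s₀) := by
          rw [← Finset.sum_mul, (hP s₀ (π s₀)).2, one_mul]
  have hInf : sInf ((fun p => dot p w) '' Amb s₀ (π s₀)) ≤ dot (P s₀ (π s₀)) w := by
    apply csInf_le
    · exact ((hAmbCpt s₀ (π s₀)).image (by
        exact continuous_finset_sum _ fun j _ => (continuous_apply j).mul continuous_const)).bddBelow
    · exact Set.mem_image_of_mem _ (hmem s₀ (π s₀))
  have hkey : w s₀ - u s₀ ≤ γ * (w s₀ - u s₀) := by
    have hw0 : w s₀ = r s₀ (π s₀) + γ * sInf ((fun p => dot p w) '' Amb s₀ (π s₀)) := by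
      conv_lhs => rw [hw]
      rfl
    have hu0 : u s₀ = r s₀ (π s₀) + γ * dot (P s₀ (π s₀)) u := by
      conv_lhs => rw [hu]
      rfl
    rw [hw0, hu0]
    have : sInf ((fun p => dot p w) '' Amb s₀ (π s₀)) - dot (P s₀ (π s₀)) u
        ≤ w s₀ - u s₀ := le_trans (by linarith) hdot
    nlinarith
  have hle0 : w s₀ - u s₀ ≤ 0 := by nlinarith
  intro s
  have := hmax s
  linarith

/-- Lemma A.2 (Bayesian safety): if the fixed ambiguity set `Amb s a` contains the random true
transition probability `Pstar ω s a` with probability at least `1 − δ/(SA)` for each `(s,a)`,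
then with probability at least `1 − δ` the robust value function lower-bounds the true value
function simultaneously for every deterministic policy. -/
theorem bayesian_safety
    {S A : ℕ} (hS : 0 < S) (hA : 0 < A)
    (r : Fin S → Fin A → ℝ) (γ : ℝ) (hγ0 : 0 ≤ γ) (hγ1 : γ < 1)
    (δ : ℝ) (hδ0 : 0 < δ) (hδ1 : δ < 1)
    {Ω : Type*} [MeasurableSpace Ω] (μ : Measure Ω) [IsProbabilityMeasure μ]
    -- the random true transition model
    (Pstar : Ω → Fin S → Fin A → Fin S → ℝ)
    (hPstarMeas : ∀ s a, Measurable fun ω => Pstar ω s a)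
    (hPstarSimplex : ∀ ω s a, Pstar ω s a ∈ stdSimplex ℝ (Fin S))
    -- the fixed ambiguity set
    (Amb : Fin S → Fin A → Set (Fin S → ℝ))
    (hAmbSub : ∀ s a, Amb s a ⊆ stdSimplex ℝ (Fin S))
    (hAmbNe : ∀ s a, (Amb s a).Nonempty)
    (hAmbCpt : ∀ s a, IsCompact (Amb s a))
    -- the robust value function of each policy under the ambiguity set
    (vR : (Fin S → Fin A) → Fin S → ℝ)
    (hvR : ∀ π, vR π = robustBellman r γ Amb π (vR π))
    -- the true value function of each policy under the realized true model
    (vT : Ω → (Fin S → Fin A) → Fin S → ℝ)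
    (hvT : ∀ ω π, vT ω π = Bellman r γ (Pstar ω) π (vT ω π))
    -- each containment event has probability at least 1 − δ/(SA)
    (hEsaProb : ∀ s a, ENNReal.ofReal (1 - δ / (S * A)) ≤ μ {ω | Pstar ω s a ∈ Amb s a})
    -- the simultaneous safety event is measurable
    (hEMeas : MeasurableSet {ω | ∀ π : Fin S → Fin A, ∀ s, vR π s ≤ vT ω π s}) :
    ENNReal.ofReal (1 - δ) ≤ μ {ω | ∀ π : Fin S → Fin A, ∀ s, vR π s ≤ vT ω π s} := by
  set E : Set Ω := {ω | ∀ π : Fin S → Fin A, ∀ s, vR π s ≤ vT ω π s} with hE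
  set C : Fin S → Fin A → Set Ω := fun s a => {ω | Pstar ω s a ∈ Amb s a} with hC
  have hCMeas : ∀ s a, MeasurableSet (C s a) := fun s a =>
    (hPstarMeas s a) (hAmbCpt s a).isClosed.measurableSet
  have hSA0 : (0:ℝ) < (S : ℝ) * (A : ℝ) := by positivity
  have hS1 : (1:ℝ) ≤ S := by exact_mod_cast hS
  have hA1 : (1:ℝ) ≤ A := by exact_mod_cast hA
  have hx1 : δ / ((S:ℝ) * A) ≤ 1 := by
    rw [div_le_one hSA0]; nlinarith
  -- complement of each containment event has small probability
  have hCompl : ∀ s a, μ (C s a)ᶜ ≤ ENNReal.ofReal (δ / (S * A)) := by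
    intro s a
    have := hEsaProb s a
    have h1 : μ (C s a)ᶜ = 1 - μ (C s a) := prob_compl_eq_one_sub (hCMeas s a)
    rw [h1]
    calc 1 - μ (C s a) ≤ 1 - ENNReal.ofReal (1 - δ / (S * A)) :=
          tsub_le_tsub_left this 1
      _ = ENNReal.ofReal 1 - ENNReal.ofReal (1 - δ / (S * A)) := by
          rw [ENNReal.ofReal_one]
      _ = ENNReal.ofReal (δ / (S * A)) := by
          rw [← ENNReal.ofReal_sub _ (by nlinarith : (0:ℝ) ≤ 1 - δ / ((S:ℝ) * A))]
          congr 1; ring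
  -- union bound
  have hsub : Eᶜ ⊆ ⋃ s, ⋃ a, (C s a)ᶜ := by
    intro ω hω
    by_contra hcon
    apply hω
    simp only [Set.mem_iUnion, not_exists, Set.mem_compl_iff, not_not] at hcon
    intro π s
    exact robust_le_true hS r γ hγ0 hγ1 (Pstar ω) (hPstarSimplex ω) Amb hAmbCpt
      (fun s a => hcon s a) π (vR π) (vT ω π) (hvR π) (hvT ω π) s
  have hEc : μ Eᶜ ≤ ENNReal.ofReal δ := by
    calc μ Eᶜ ≤ μ (⋃ s, ⋃ a, (C s a)ᶜ) := measure_mono hsub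
      _ ≤ ∑' s : Fin S, μ (⋃ a, (C s a)ᶜ) := measure_iUnion_le _
      _ ≤ ∑' s : Fin S, ∑' a : Fin A, μ (C s a)ᶜ := by
          exact ENNReal.tsum_le_tsum fun s => measure_iUnion_le _
      _ ≤ ∑' s : Fin S, ∑' a : Fin A, ENNReal.ofReal (δ / (S * A)) := by
          exact ENNReal.tsum_le_tsum fun s => ENNReal.tsum_le_tsum fun a => hCompl s a
      _ = (S : ENNReal) * ((A : ENNReal) * ENNReal.ofReal (δ / (S * A))) := by
          simp [tsum_fintype, Finset.sum_const, nsmul_eq_mul, mul_comm]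
      _ = ENNReal.ofReal δ := by
          rw [← ENNReal.ofReal_natCast S, ← ENNReal.ofReal_natCast A,
            ← ENNReal.ofReal_mul (by positivity), ← ENNReal.ofReal_mul (by positivity)]
          congr 1
          have hSne : (S:ℝ) ≠ 0 := Nat.cast_ne_zero.mpr hS.ne'
          have hAne : (A:ℝ) ≠ 0 := Nat.cast_ne_zero.mpr hA.ne'
          field_simp
  have hEeq : μ E = 1 - μ Eᶜ := by
    have := prob_compl_eq_one_sub (μ := μ) hEMeas.compl
    rwa [compl_compl] at this
  rw [hEeq]
  calc ENNReal.ofReal (1 - δ) = ENNReal.ofReal 1 - ENNReal.ofReal δ :=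
        ENNReal.ofReal_sub 1 hδ0.le
    _ = 1 - ENNReal.ofReal δ := by rw [ENNReal.ofReal_one]
    _ ≤ 1 - μ Eᶜ := tsub_le_tsub_left hEc 1
end
end

section
/- Fix true transition probabilities P*, δ ∈ (0,1), and for each state–action pair (s,a) a sample size n_{s,a} ≥ 1. For each (s,a), let p̄_{s,a} be the empirical distribution of n_{s,a} i.i.d. samples from p*_{s,a}, all samples across all state–action pairs being independent. Define the Hoeffding ambiguity set P^H_{s,a} = {p ∈ Δ^S : ‖p − p̄_{s,a}‖₁ ≤ √((2/n_{s,a}) log(S·A·2^S/δ))}. Then, with probability at least 1 − δ over the samples, v̂_{P^H}^π ≤ v_{P*}^π componentwise simultaneously for every deterministic policy π; in particular, for the optimal robust policy π̂* of the RMDP with ambiguity set P^H and any initial distribution p₀ ∈ Δ^S, p₀ᵀ v̂*_{P^H} ≤ p₀ᵀ v_{P*}^{π̂*} with probability at least 1 − δ. (Theorem 2: safety of the Hoeffding confidence-region ambiguity set.) -/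
open MeasureTheory

noncomputable section

/-- Optimal robust Bellman operator under ambiguity set `Amb`. -/
def optRobustBellman {S A : ℕ} (r : Fin S → Fin A → ℝ) (γ : ℝ)
    (Amb : Fin S → Fin A → Set (Fin S → ℝ)) (v : Fin S → ℝ) : Fin S → ℝ :=
  fun s => ⨆ a : Fin A, (r s a + γ * sInf ((fun p => dot p v) '' Amb s a))

/-- Empirical distribution of `n` samples `X i` with values in `{1,…,S}`. -/
def empiricalDist {Ω : Type*} {S n : ℕ} (X : Fin n → Ω → Fin S) (ω : Ω) : Fin S → ℝ :=
  fun j => (Finset.univ.filter fun i => X i ω = j).card / n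

/-!
On the event that every true law `Pstar s a` lies in its Hoeffding ball, the robust Bellman
operator of each policy lies pointwise below the true one, and since both are `γ`-contractions a
maximum-principle argument gives `v̂^π ≤ v^π`. The optimal robust value is the robust value of
`π̂*` (uniqueness of the fixed point), so the second claim follows from the first.

That event fails with probability at most `δ`. By Weissman's argument `‖p - p̄‖₁ > ε` forces
`p̄(B) - p(B) > ε / 2` for `B = {j | p j ≤ p̄ j}`; for each fixed `B` Hoeffding's inequality
bounds this by `exp (-n ε² / 2)`, which the chosen radius makes equal to `δ / (S A 2^S)`, and a
union bound over the `S A 2^S` triples `(s, a, B)` finishes.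
-/

open ProbabilityTheory

section RobustBellman

variable {S A : ℕ}

lemma dot_le_of_forall_le {p x : Fin S → ℝ} {M : ℝ} (hp : p ∈ stdSimplex ℝ (Fin S))
    (h : ∀ j, x j ≤ M) : dot p x ≤ M :=
  calc dot p x ≤ ∑ j, p j * M := Finset.sum_le_sum fun j _ ↦
        mul_le_mul_of_nonneg_left (h j) (hp.1 j)
    _ = M := by rw [← Finset.sum_mul, hp.2, one_mul]

lemma le_dot_of_forall_le {p x : Fin S → ℝ} {M : ℝ} (hp : p ∈ stdSimplex ℝ (Fin S))
    (h : ∀ j, M ≤ x j) : M ≤ dot p x :=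
  calc M = ∑ j, p j * M := by rw [← Finset.sum_mul, hp.2, one_mul]
    _ ≤ dot p x := Finset.sum_le_sum fun j _ ↦ mul_le_mul_of_nonneg_left (h j) (hp.1 j)

lemma dot_sub (p u w : Fin S → ℝ) : dot p u - dot p w = dot p (u - w) := by
  simp only [dot, Pi.sub_apply, mul_sub, Finset.sum_sub_distrib]

lemma bddBelow_image_dot {P : Set (Fin S → ℝ)} (hP : P ⊆ stdSimplex ℝ (Fin S))
    (v : Fin S → ℝ) : BddBelow ((fun p ↦ dot p v) '' P) :=
  ⟨⨅ j, v j, by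
    rintro _ ⟨p, hp, rfl⟩
    exact le_dot_of_forall_le (hP hp) fun j ↦ ciInf_le (Finite.bddBelow_range v) j⟩

lemma dot_le_dot_add {p u w : Fin S → ℝ} {D : ℝ} (hp : p ∈ stdSimplex ℝ (Fin S))
    (h : ∀ j, u j ≤ w j + D) : dot p u ≤ dot p w + D := by
  have : dot p (u - w) ≤ D := dot_le_of_forall_le hp fun j ↦ sub_le_iff_le_add'.2 (h j)
  linarith [dot_sub p u w]

lemma le_of_forall_le_add_mul {ι : Type*} [Finite ι] {u w : ι → ℝ} {γ : ℝ} (hγ : γ < 1)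
    (h : ∀ s D, (∀ j, u j ≤ w j + D) → u s ≤ w s + γ * D) : u ≤ w := by
  intro s
  have : Nonempty ι := ⟨s⟩
  obtain ⟨s₀, hs₀⟩ := Finite.exists_max fun j ↦ u j - w j
  have hD : u s₀ - w s₀ ≤ 0 := by
    have := h s₀ (u s₀ - w s₀) fun j ↦ by linarith [hs₀ j]
    nlinarith
  linarith [hs₀ s]

variable {r : Fin S → Fin A → ℝ} {γ : ℝ} {Amb : Fin S → Fin A → Set (Fin S → ℝ)}
  {π : Fin S → Fin A}

lemma robustBellman_le_add (hγ : 0 ≤ γ) (hAmb : ∀ s a, Amb s a ⊆ stdSimplex ℝ (Fin S))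
    (hne : ∀ s a, (Amb s a).Nonempty) {u w : Fin S → ℝ} {D : ℝ} (h : ∀ j, u j ≤ w j + D)
    (s : Fin S) : robustBellman r γ Amb π u s ≤ robustBellman r γ Amb π w s + γ * D := by
  have : sInf ((fun p ↦ dot p u) '' Amb s (π s)) ≤
      sInf ((fun p ↦ dot p w) '' Amb s (π s)) + D := by
    rw [← sub_le_iff_le_add]
    refine le_csInf ((hne s (π s)).image _) ?_
    rintro _ ⟨p, hp, rfl⟩
    have := csInf_le (bddBelow_image_dot (hAmb s (π s)) u) ⟨p, hp, rfl⟩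
    linarith [dot_le_dot_add (hAmb s (π s) hp) h]
  simp only [robustBellman]
  linarith [mul_le_mul_of_nonneg_left this hγ]

lemma robustBellman_le_bellman_add (hγ : 0 ≤ γ) (hAmb : ∀ s a, Amb s a ⊆ stdSimplex ℝ (Fin S))
    {P : Fin S → Fin A → Fin S → ℝ} (hP : ∀ s, P s (π s) ∈ Amb s (π s))
    {u w : Fin S → ℝ} {D : ℝ} (h : ∀ j, u j ≤ w j + D) (s : Fin S) :
    robustBellman r γ Amb π u s ≤ Bellman r γ P π w s + γ * D := by
  have : sInf ((fun p ↦ dot p u) '' Amb s (π s)) ≤ dot (P s (π s)) w + D :=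
    (csInf_le (bddBelow_image_dot (hAmb s (π s)) u) ⟨_, hP s, rfl⟩).trans
      (dot_le_dot_add (hAmb s (π s) (hP s)) h)
  simp only [robustBellman, Bellman]
  linarith [mul_le_mul_of_nonneg_left this hγ]

lemma robust_fixedPoint_le_fixedPoint (hγ0 : 0 ≤ γ) (hγ1 : γ < 1)
    (hAmb : ∀ s a, Amb s a ⊆ stdSimplex ℝ (Fin S))
    {P : Fin S → Fin A → Fin S → ℝ} (hP : ∀ s, P s (π s) ∈ Amb s (π s)) {u w : Fin S → ℝ}
    (hu : u = robustBellman r γ Amb π u) (hw : w = Bellman r γ P π w) : u ≤ w :=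
  le_of_forall_le_add_mul hγ1 fun s _ h ↦ by
    rw [hu, hw]; exact robustBellman_le_bellman_add hγ0 hAmb hP h s

lemma robust_fixedPoint_unique (hγ0 : 0 ≤ γ) (hγ1 : γ < 1)
    (hAmb : ∀ s a, Amb s a ⊆ stdSimplex ℝ (Fin S)) (hne : ∀ s a, (Amb s a).Nonempty)
    {u w : Fin S → ℝ} (hu : u = robustBellman r γ Amb π u)
    (hw : w = robustBellman r γ Amb π w) : u = w := by
  refine le_antisymm (le_of_forall_le_add_mul hγ1 fun s _ h ↦ ?_)
    (le_of_forall_le_add_mul hγ1 fun s _ h ↦ ?_) <;>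
  · rw [hu, hw]; exact robustBellman_le_add hγ0 hAmb hne h s

end RobustBellman

section EmpiricalDist

variable {Ω : Type*} {S m : ℕ}

lemma sum_empiricalDist (X : Fin m → Ω → Fin S) (ω : Ω) (B : Finset (Fin S)) :
    ∑ j ∈ B, empiricalDist X ω j = (∑ i, if X i ω ∈ B then (1 : ℝ) else 0) / m := by
  simp only [empiricalDist, ← Finset.sum_div, Finset.sum_boole]
  exact_mod_cast congrArg (fun k : ℕ ↦ (k : ℝ) / m)
    (Finset.sum_card_fiberwise_eq_card_filter Finset.univ B fun i ↦ X i ω)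

lemma empiricalDist_mem_stdSimplex (hm : 0 < m) (X : Fin m → Ω → Fin S) (ω : Ω) :
    empiricalDist X ω ∈ stdSimplex ℝ (Fin S) := by
  refine ⟨fun j ↦ by unfold empiricalDist; positivity, ?_⟩
  rw [sum_empiricalDist]
  simp [hm.ne']

end EmpiricalDist

lemma exists_finset_sum_add_half_lt {ι : Type*} [Fintype ι] {p q : ι → ℝ}
    (hpq : ∑ j, p j = ∑ j, q j) {ε : ℝ} (h : ε < ∑ j, |p j - q j|) :
    ∃ B : Finset ι, ∑ j ∈ B, p j + ε / 2 < ∑ j ∈ B, q j := by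
  classical
  refine ⟨Finset.univ.filter fun j ↦ p j ≤ q j, ?_⟩
  have habs : ∀ j, |p j - q j| = 2 * (if p j ≤ q j then q j - p j else 0) - (q j - p j) := by
    intro j
    split_ifs with hj
    · rw [abs_of_nonpos (by linarith)]; ring
    · rw [abs_of_pos (by linarith)]; ring
  simp only [habs, Finset.sum_sub_distrib, ← Finset.mul_sum, ← Finset.sum_filter, hpq,
    sub_self] at h
  linarith

section Hoeffding

variable {Ω : Type*} [MeasurableSpace Ω] {μ : Measure Ω} {S m : ℕ} {p : Fin S → ℝ}

lemma measure_preimage_finset_eq {Y : Ω → Fin S} (hY : Measurable Y) (hp : ∀ j, 0 ≤ p j)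
    (hlaw : ∀ j, μ {ω | Y ω = j} = ENNReal.ofReal (p j)) (B : Finset (Fin S)) :
    μ (Y ⁻¹' B) = ENNReal.ofReal (∑ j ∈ B, p j) := by
  rw [← sum_measure_preimage_singleton B fun j _ ↦ hY (measurableSet_singleton j),
    ENNReal.ofReal_sum_of_nonneg fun j _ ↦ hp j]
  exact Finset.sum_congr rfl fun j _ ↦ hlaw j

variable [IsProbabilityMeasure μ] {X : Fin m → Ω → Fin S}

lemma measure_sum_le_sum_empiricalDist_le (hm : 0 < m) (hX : ∀ i, Measurable (X i))
    (hindep : iIndepFun X μ) (hp : ∀ j, 0 ≤ p j)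
    (hlaw : ∀ i j, μ {ω | X i ω = j} = ENNReal.ofReal (p j)) (B : Finset (Fin S))
    {t : ℝ} (ht : 0 ≤ t) :
    μ {ω | ∑ j ∈ B, p j + t ≤ ∑ j ∈ B, empiricalDist X ω j} ≤
      ENNReal.ofReal (Real.exp (-(2 * m * t ^ 2))) := by
  set f : Fin S → ℝ := fun j ↦ if j ∈ B then 1 else 0
  set Z : Fin m → Ω → ℝ := fun i ω ↦ f (X i ω)
  have hZ : ∀ i, Z i = (X i ⁻¹' B).indicator 1 := fun i ↦ by
    ext ω; by_cases h : X i ω ∈ B <;> simp [Z, f, h]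
  have hmeanZ : ∀ i, μ[Z i] = ∑ j ∈ B, p j := fun i ↦ by
    rw [hZ, integral_indicator_one ((hX i) B.measurableSet), measureReal_def,
      measure_preimage_finset_eq (hX i) hp (hlaw i),
      ENNReal.toReal_ofReal (Finset.sum_nonneg fun j _ ↦ hp j)]
  have hsubG : ∀ i ∈ Finset.univ,
      HasSubgaussianMGF (fun ω ↦ Z i ω - μ[Z i]) ((‖(1 : ℝ) - 0‖₊ / 2) ^ 2) μ := fun i _ ↦
    hasSubgaussianMGF_of_mem_Icc ((measurable_of_countable f).comp (hX i)).aemeasurable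
      (ae_of_all _ fun ω ↦ by by_cases h : X i ω ∈ B <;> simp [Z, f, h])
  have hindepZ : iIndepFun (fun i ω ↦ Z i ω - μ[Z i]) μ :=
    hindep.comp (fun i j ↦ f j - ∫ ω, Z i ω ∂μ) fun _ ↦ measurable_of_countable _
  have hm' : (0 : ℝ) < m := by exact_mod_cast hm
  have hevent : {ω | ∑ j ∈ B, p j + t ≤ ∑ j ∈ B, empiricalDist X ω j} =
      {ω | m * t ≤ ∑ i, (Z i ω - μ[Z i])} := by
    ext ω
    simp only [Set.mem_ofPred_eq, sum_empiricalDist, hmeanZ, Finset.sum_sub_distrib,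
      Finset.sum_const, Finset.card_univ, Fintype.card_fin, nsmul_eq_mul, le_div_iff₀ hm']
    constructor <;> intro h <;> linarith
  rw [hevent, ← ofReal_measureReal]
  refine ENNReal.ofReal_le_ofReal ((HasSubgaussianMGF.measure_sum_ge_le_of_iIndepFun
    hindepZ hsubG (by positivity)).trans_eq ?_)
  congr 1
  simp only [sub_zero, nnnorm_one, Finset.sum_const, Finset.card_univ, Fintype.card_fin,
    nsmul_eq_mul, NNReal.coe_mul, NNReal.coe_natCast, NNReal.coe_pow, NNReal.coe_div,
    NNReal.coe_one, NNReal.coe_ofNat]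
  field_simp

lemma measure_lt_l1_dist_empiricalDist_le (hm : 0 < m) (hX : ∀ i, Measurable (X i))
    (hindep : iIndepFun X μ) (hp : p ∈ stdSimplex ℝ (Fin S))
    (hlaw : ∀ i j, μ {ω | X i ω = j} = ENNReal.ofReal (p j)) {ε : ℝ} (hε : 0 ≤ ε) :
    μ {ω | ε < ∑ j, |p j - empiricalDist X ω j|} ≤
      2 ^ S * ENNReal.ofReal (Real.exp (-(m * ε ^ 2 / 2))) :=
  calc μ {ω | ε < ∑ j, |p j - empiricalDist X ω j|}
      ≤ μ (⋃ B : Finset (Fin S),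
          {ω | ∑ j ∈ B, p j + ε / 2 ≤ ∑ j ∈ B, empiricalDist X ω j}) :=
        measure_mono fun ω hω ↦ by
          obtain ⟨B, hB⟩ := exists_finset_sum_add_half_lt
            (by rw [hp.2, (empiricalDist_mem_stdSimplex hm X ω).2]) hω
          exact Set.mem_iUnion.2 ⟨B, hB.le⟩
    _ ≤ ∑ B : Finset (Fin S),
          μ {ω | ∑ j ∈ B, p j + ε / 2 ≤ ∑ j ∈ B, empiricalDist X ω j} :=
        measure_iUnion_fintype_le μ _
    _ ≤ ∑ _B : Finset (Fin S), ENNReal.ofReal (Real.exp (-(2 * m * (ε / 2) ^ 2))) :=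
        Finset.sum_le_sum fun B _ ↦
          measure_sum_le_sum_empiricalDist_le hm hX hindep hp.1 hlaw B (by positivity)
    _ = 2 ^ S * ENNReal.ofReal (Real.exp (-(m * ε ^ 2 / 2))) := by
        rw [Finset.sum_const, Finset.card_univ, Fintype.card_finset, Fintype.card_fin,
          nsmul_eq_mul, Nat.cast_pow, Nat.cast_ofNat]
        ring_nf

end Hoeffding

lemma exp_neg_mul_sqrt_two_div_mul_log_sq {m K δ : ℝ} (hm : 0 < m) (hδ : 0 < δ)
    (hδK : δ ≤ K) :
    Real.exp (-(m * Real.sqrt (2 / m * Real.log (K / δ)) ^ 2 / 2)) = δ / K := by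
  have hlog : 0 ≤ Real.log (K / δ) := Real.log_nonneg ((one_le_div hδ).2 hδK)
  have hexponent : m * (2 / m * Real.log (K / δ)) / 2 = Real.log (K / δ) := by field_simp
  rw [Real.sq_sqrt (by positivity), hexponent, Real.exp_neg,
    Real.exp_log (div_pos (hδ.trans_le hδK) hδ), inv_div]

lemma measure_exists_lt_l1_dist_empiricalDist_le {Ω : Type*} [MeasurableSpace Ω]
    {μ : Measure Ω} [IsProbabilityMeasure μ] {S A : ℕ} {δ : ℝ} (hδ0 : 0 < δ) (hδ1 : δ < 1)
    {P : Fin S → Fin A → Fin S → ℝ} (hP : ∀ s a, P s a ∈ stdSimplex ℝ (Fin S))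
    {n : Fin S → Fin A → ℕ} (hn : ∀ s a, 1 ≤ n s a)
    {X : (s : Fin S) → (a : Fin A) → Fin (n s a) → Ω → Fin S}
    (hXmeas : ∀ s a i, Measurable (X s a i))
    (hXindep : iIndepFun
      (fun (i : (s : Fin S) × (a : Fin A) × Fin (n s a)) ↦ X i.1 i.2.1 i.2.2) μ)
    (hXlaw : ∀ s a i j, μ {ω | X s a i ω = j} = ENNReal.ofReal (P s a j)) :
    μ {ω | ∃ s a, Real.sqrt ((2 / (n s a)) * Real.log (S * A * 2 ^ S / δ)) <
      ∑ j, |P s a j - empiricalDist (X s a) ω j|} ≤ ENNReal.ofReal δ := by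
  have hpair : ∀ s a, μ {ω | Real.sqrt ((2 / (n s a)) * Real.log (S * A * 2 ^ S / δ)) <
      ∑ j, |P s a j - empiricalDist (X s a) ω j|} ≤ ENNReal.ofReal (δ / (S * A)) := by
    intro s a
    have hK : δ ≤ S * A * 2 ^ S := by
      have : (1 : ℝ) ≤ S * A * 2 ^ S := one_le_mul_of_one_le_of_one_le
        (one_le_mul_of_one_le_of_one_le (by exact_mod_cast s.pos) (by exact_mod_cast a.pos))
        (one_le_pow₀ one_le_two)
      linarith
    have hindep : iIndepFun (X s a) μ :=
      hXindep.precomp (g := fun i ↦ ⟨s, a, i⟩) fun i j h ↦ by simpa using h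
    refine (measure_lt_l1_dist_empiricalDist_le (hn s a) (hXmeas s a) hindep (hP s a)
      (hXlaw s a) (Real.sqrt_nonneg _)).trans_eq ?_
    rw [exp_neg_mul_sqrt_two_div_mul_log_sq (by exact_mod_cast hn s a) hδ0 hK,
      ← ENNReal.ofReal_ofNat, ← ENNReal.ofReal_pow zero_le_two,
      ← ENNReal.ofReal_mul (by positivity)]
    congr 1
    field_simp
  calc μ {ω | ∃ s a, Real.sqrt ((2 / (n s a)) * Real.log (S * A * 2 ^ S / δ)) <
        ∑ j, |P s a j - empiricalDist (X s a) ω j|}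
      ≤ ∑ s, ∑ a, μ {ω | Real.sqrt ((2 / (n s a)) * Real.log (S * A * 2 ^ S / δ)) <
        ∑ j, |P s a j - empiricalDist (X s a) ω j|} := by
        simp only [Set.ofPred_exists]
        exact (measure_iUnion_fintype_le μ _).trans
          (Finset.sum_le_sum fun s _ ↦ measure_iUnion_fintype_le μ _)
    _ ≤ ∑ _s : Fin S, ∑ _a : Fin A, ENNReal.ofReal (δ / (S * A)) :=
        Finset.sum_le_sum fun s _ ↦ Finset.sum_le_sum fun a _ ↦ hpair s a
    _ = ENNReal.ofReal (S * A * (δ / (S * A))) := by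
        rw [ENNReal.ofReal_mul (by positivity), ENNReal.ofReal_mul (by positivity)]
        simp [mul_assoc]
    _ ≤ ENNReal.ofReal δ := by
        rw [← mul_div_assoc]
        exact ENNReal.ofReal_le_ofReal
          (div_le_of_le_mul₀ (by positivity) hδ0.le (mul_comm _ _).le)

lemma ofReal_one_sub_le_of_measure_compl_le {Ω : Type*} [MeasurableSpace Ω] {μ : Measure Ω}
    [IsProbabilityMeasure μ] {s : Set Ω} {δ : ℝ} (hδ : 0 ≤ δ)
    (h : μ sᶜ ≤ ENNReal.ofReal δ) : ENNReal.ofReal (1 - δ) ≤ μ s :=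
  calc ENNReal.ofReal (1 - δ) = 1 - ENNReal.ofReal δ := by
        rw [ENNReal.ofReal_sub _ hδ, ENNReal.ofReal_one]
    _ ≤ 1 - μ sᶜ := tsub_le_tsub_left h 1
    _ ≤ μ s := tsub_le_iff_right.2 (by simpa using measure_univ_le_add_compl (μ := μ) s)

theorem hoeffding_ambiguity_safety_general
    {S A : ℕ}
    (r : Fin S → Fin A → ℝ) (γ : ℝ) (hγ0 : 0 ≤ γ) (hγ1 : γ < 1)
    (δ : ℝ) (hδ0 : 0 < δ) (hδ1 : δ < 1)
    (Pstar : Fin S → Fin A → Fin S → ℝ)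
    (hPstar : ∀ s a, Pstar s a ∈ stdSimplex ℝ (Fin S))
    -- sample sizes
    (n : Fin S → Fin A → ℕ) (hn : ∀ s a, 1 ≤ n s a)
    {Ω : Type*} [MeasurableSpace Ω] (μ : Measure Ω) [IsProbabilityMeasure μ]
    -- the i.i.d. samples: X s a i is the i-th sample for the pair (s,a)
    (X : (s : Fin S) → (a : Fin A) → Fin (n s a) → Ω → Fin S)
    (hXmeas : ∀ s a i, Measurable (X s a i))
    (hXindep : ProbabilityTheory.iIndepFun
      (fun (i : (s : Fin S) × (a : Fin A) × Fin (n s a)) => X i.1 i.2.1 i.2.2) μ)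
    (hXlaw : ∀ s a i j, μ {ω | X s a i ω = j} = ENNReal.ofReal (Pstar s a j))
    -- the Hoeffding ambiguity set
    (AmbH : Ω → Fin S → Fin A → Set (Fin S → ℝ))
    (hAmbH : ∀ ω s a, AmbH ω s a = {p ∈ stdSimplex ℝ (Fin S) |
      ∑ j, |p j - empiricalDist (X s a) ω j| ≤
        Real.sqrt ((2 / (n s a)) * Real.log (S * A * 2 ^ S / δ))})
    -- robust value function of each policy under the realized Hoeffding set
    (vR : Ω → (Fin S → Fin A) → Fin S → ℝ)
    (hvR : ∀ ω π, vR ω π = robustBellman r γ (AmbH ω) π (vR ω π))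
    -- true value function of each policy
    (vT : (Fin S → Fin A) → Fin S → ℝ)
    (hvT : ∀ π, vT π = Bellman r γ Pstar π (vT π))
    -- optimal robust value function and an optimal robust policy
    (vRstar : Ω → Fin S → ℝ) (πhat : Ω → Fin S → Fin A)
    (hπhat : ∀ ω, vRstar ω = robustBellman r γ (AmbH ω) (πhat ω) (vRstar ω))
    -- initial distribution
    (p0 : Fin S → ℝ) (hp0 : p0 ∈ stdSimplex ℝ (Fin S)) :
    ENNReal.ofReal (1 - δ) ≤ μ {ω | ∀ π : Fin S → Fin A, ∀ s, vR ω π s ≤ vT π s} ∧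
    ENNReal.ofReal (1 - δ) ≤ μ {ω | dot p0 (vRstar ω) ≤ dot p0 (vT (πhat ω))} := by
  have hAmb : ∀ ω s a, AmbH ω s a ⊆ stdSimplex ℝ (Fin S) := fun ω s a ↦ by
    rw [hAmbH]; exact fun p hp ↦ hp.1
  have hne : ∀ ω s a, (AmbH ω s a).Nonempty := fun ω s a ↦ ⟨empiricalDist (X s a) ω, by
    rw [hAmbH]; exact ⟨empiricalDist_mem_stdSimplex (hn s a) _ ω, by simp [Real.sqrt_nonneg]⟩⟩
  have hsafe : ∀ ω, (∀ s a, Pstar s a ∈ AmbH ω s a) → ∀ π s, vR ω π s ≤ vT π s :=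
    fun ω hmem π ↦ robust_fixedPoint_le_fixedPoint hγ0 hγ1 (hAmb ω) (fun s ↦ hmem s (π s))
      (hvR ω π) (hvT π)
  have hreturn : ∀ ω, (∀ π s, vR ω π s ≤ vT π s) →
      dot p0 (vRstar ω) ≤ dot p0 (vT (πhat ω)) := fun ω hle ↦ by
    rw [robust_fixedPoint_unique hγ0 hγ1 (hAmb ω) (hne ω) (hπhat ω) (hvR ω (πhat ω))]
    exact Finset.sum_le_sum fun j _ ↦ mul_le_mul_of_nonneg_left (hle _ j) (hp0.1 j)
  have hunsafe : {ω | ∀ π s, vR ω π s ≤ vT π s}ᶜ ⊆ {ω | ∃ s a,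
      Real.sqrt ((2 / (n s a)) * Real.log (S * A * 2 ^ S / δ)) <
        ∑ j, |Pstar s a j - empiricalDist (X s a) ω j|} := fun ω hω ↦ by
    simp only [Set.mem_compl_iff, Set.mem_ofPred_eq] at hω ⊢
    by_contra! hclose
    exact hω (hsafe ω fun s a ↦ by rw [hAmbH]; exact ⟨hPstar s a, hclose s a⟩)
  have hvalues : ENNReal.ofReal (1 - δ) ≤ μ {ω | ∀ π s, vR ω π s ≤ vT π s} :=
    ofReal_one_sub_le_of_measure_compl_le hδ0.le ((measure_mono hunsafe).trans
      (measure_exists_lt_l1_dist_empiricalDist_le hδ0 hδ1 hPstar hn hXmeas hXindep hXlaw))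
  exact ⟨hvalues, hvalues.trans (measure_mono hreturn)⟩

/-- Theorem 2: safety of the Hoeffding confidence-region ambiguity set.  With probability at
least `1 − δ` over the i.i.d. samples, the robust value function for the Hoeffding ambiguity
set lower-bounds the true value function simultaneously for every deterministic policy; in
particular the optimal robust return estimate is a safe estimate for the optimal robust
policy. -/
theorem hoeffding_ambiguity_safety
    {S A : ℕ} (hS : 0 < S) (hA : 0 < A)
    (r : Fin S → Fin A → ℝ) (γ : ℝ) (hγ0 : 0 ≤ γ) (hγ1 : γ < 1)
    (δ : ℝ) (hδ0 : 0 < δ) (hδ1 : δ < 1)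
    (Pstar : Fin S → Fin A → Fin S → ℝ)
    (hPstar : ∀ s a, Pstar s a ∈ stdSimplex ℝ (Fin S))
    -- sample sizes
    (n : Fin S → Fin A → ℕ) (hn : ∀ s a, 1 ≤ n s a)
    {Ω : Type*} [MeasurableSpace Ω] (μ : Measure Ω) [IsProbabilityMeasure μ]
    -- the i.i.d. samples: X s a i is the i-th sample for the pair (s,a)
    (X : (s : Fin S) → (a : Fin A) → Fin (n s a) → Ω → Fin S)
    (hXmeas : ∀ s a i, Measurable (X s a i))
    (hXindep : ProbabilityTheory.iIndepFun
      (fun (i : (s : Fin S) × (a : Fin A) × Fin (n s a)) => X i.1 i.2.1 i.2.2) μ)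
    (hXlaw : ∀ s a i j, μ {ω | X s a i ω = j} = ENNReal.ofReal (Pstar s a j))
    -- the Hoeffding ambiguity set
    (AmbH : Ω → Fin S → Fin A → Set (Fin S → ℝ))
    (hAmbH : ∀ ω s a, AmbH ω s a = {p ∈ stdSimplex ℝ (Fin S) |
      ∑ j, |p j - empiricalDist (X s a) ω j| ≤
        Real.sqrt ((2 / (n s a)) * Real.log (S * A * 2 ^ S / δ))})
    -- robust value function of each policy under the realized Hoeffding set
    (vR : Ω → (Fin S → Fin A) → Fin S → ℝ)
    (hvR : ∀ ω π, vR ω π = robustBellman r γ (AmbH ω) π (vR ω π))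
    -- true value function of each policy
    (vT : (Fin S → Fin A) → Fin S → ℝ)
    (hvT : ∀ π, vT π = Bellman r γ Pstar π (vT π))
    -- optimal robust value function and an optimal robust policy
    (vRstar : Ω → Fin S → ℝ) (πhat : Ω → Fin S → Fin A)
    (hvRstar : ∀ ω, vRstar ω = optRobustBellman r γ (AmbH ω) (vRstar ω))
    (hπhat : ∀ ω, vRstar ω = robustBellman r γ (AmbH ω) (πhat ω) (vRstar ω))
    -- initial distribution
    (p0 : Fin S → ℝ) (hp0 : p0 ∈ stdSimplex ℝ (Fin S))
    -- measurability of the two events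
    (hE1 : MeasurableSet {ω | ∀ π : Fin S → Fin A, ∀ s, vR ω π s ≤ vT π s})
    (hE2 : MeasurableSet {ω | dot p0 (vRstar ω) ≤ dot p0 (vT (πhat ω))}) :
    ENNReal.ofReal (1 - δ) ≤ μ {ω | ∀ π : Fin S → Fin A, ∀ s, vR ω π s ≤ vT π s} ∧
    ENNReal.ofReal (1 - δ) ≤ μ {ω | dot p0 (vRstar ω) ≤ dot p0 (vT (πhat ω))} :=
  hoeffding_ambiguity_safety_general r γ hγ0 hγ1 δ hδ0 hδ1 Pstar hPstar n hn μ X hXmeas hXindep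
    hXlaw AmbH hAmbH vR hvR vT hvT vRstar πhat hπhat p0 hp0
end
end

section
/- Let V ⊆ ℝ^S be a finite set of value functions, θ ∈ Δ^S, and ψ ≥ 0 such that for every v ∈ V there exists q ∈ K(v) with ‖q − θ‖₁ ≤ ψ. Define L = { p ∈ Δ^S : ‖p − θ‖₁ ≤ ψ }. Then for every v ∈ V, μ[{ω : min_{p ∈ L} ⟨p, v⟩ ≤ ⟨X(ω), v⟩}] ≥ ζ. (The lemma on the RSVF ambiguity set L_{s,a}(V).) -/
open MeasureTheory

noncomputable section

/-- `g(v)`: the largest `g` such that `g ≤ ⟨X(ω), v⟩` with probability at least `ζ`. -/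
def gVal {Ω : Type*} [MeasurableSpace Ω] {S : ℕ} (μ : Measure Ω) (X : Ω → Fin S → ℝ)
    (ζ : ℝ) (v : Fin S → ℝ) : ℝ :=
  sSup {g : ℝ | ENNReal.ofReal ζ ≤ μ {ω | g ≤ dot (X ω) v}}

/-- `K(v)`: the set of safety-sufficient transition probabilities for value function `v`. -/
def Ksafe {Ω : Type*} [MeasurableSpace Ω] {S : ℕ} (μ : Measure Ω) (X : Ω → Fin S → ℝ)
    (ζ : ℝ) (v : Fin S → ℝ) : Set (Fin S → ℝ) :=
  {p ∈ stdSimplex ℝ (Fin S) | dot p v ≤ gVal μ X ζ v}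

/-- Lemma 5 (the RSVF ambiguity set `L`): if the `L1` ball `L` of radius `ψ` around `θ`
intersects `K(v)` for every value function `v` in the finite set `V`, then for every `v ∈ V`
the robust estimate over `L` lower-bounds `⟨X(ω), v⟩` with probability at least `ζ`. -/
theorem rsvf_set_safe
    {Ω : Type*} [MeasurableSpace Ω] (μ : Measure Ω) [IsProbabilityMeasure μ]
    {S : ℕ} (X : Ω → Fin S → ℝ) (hXmeas : Measurable X)
    (hXsimplex : ∀ ω, X ω ∈ stdSimplex ℝ (Fin S))
    (ζ : ℝ) (hζ0 : 0 < ζ) (hζ1 : ζ < 1)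
    (V : Finset (Fin S → ℝ))
    -- the suprema defining g(v) are attained
    (hattain : ∀ v ∈ V, ENNReal.ofReal ζ ≤ μ {ω | gVal μ X ζ v ≤ dot (X ω) v})
    (θ : Fin S → ℝ) (hθ : θ ∈ stdSimplex ℝ (Fin S)) (ψ : ℝ) (hψ : 0 ≤ ψ)
    (hqcover : ∀ v ∈ V, ∃ q ∈ Ksafe μ X ζ v, ∑ j, |q j - θ j| ≤ ψ)
    (L : Set (Fin S → ℝ))
    (hL : L = {p ∈ stdSimplex ℝ (Fin S) | ∑ j, |p j - θ j| ≤ ψ}) :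
    ∀ v ∈ V, ENNReal.ofReal ζ ≤ μ {ω | sInf ((fun p => dot p v) '' L) ≤ dot (X ω) v} := by
  intro v hv
  obtain ⟨q, hqK, hqθ⟩ := hqcover v hv
  have hqL : q ∈ L := by rw [hL]; exact ⟨hqK.1, hqθ⟩
  have hbdd : BddBelow ((fun p => dot p v) '' L) := by
    refine ⟨-∑ j, |v j|, ?_⟩
    rintro x ⟨p, hp, rfl⟩
    rw [hL] at hp
    obtain ⟨⟨hp0, hp1⟩, -⟩ := hp
    have : ∀ j ∈ Finset.univ, -|v j| ≤ p j * v j := by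
      intro j _
      have h0 := hp0 j
      have h1 : p j ≤ 1 := by
        calc p j = ∑ i ∈ {j}, p i := by simp
        _ ≤ ∑ i, p i := Finset.sum_le_sum_of_subset_of_nonneg (Finset.subset_univ _)
            (fun i _ _ => hp0 i)
        _ = 1 := hp1
      rcases le_or_gt 0 (v j) with h | h
      · nlinarith [abs_nonneg (v j)]
      · have : |v j| = -(v j) := abs_of_neg h
        nlinarith
    calc -∑ j, |v j| = ∑ j, -|v j| := by rw [Finset.sum_neg_distrib]
    _ ≤ ∑ j, p j * v j := Finset.sum_le_sum this
    _ = dot p v := rfl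
  have hinf : sInf ((fun p => dot p v) '' L) ≤ dot q v :=
    csInf_le hbdd ⟨q, hqL, rfl⟩
  have hsub : {ω | gVal μ X ζ v ≤ dot (X ω) v} ⊆
      {ω | sInf ((fun p => dot p v) '' L) ≤ dot (X ω) v} := by
    intro ω hω
    exact le_trans (le_trans hinf hqK.2) hω
  exact le_trans (hattain v hv) (measure_mono hsub)
end
end

section
/- Let δ ∈ (0,1) and set ζ = 1 − δ/(SA). Let (Ω, F, μ) be a probability space and let P*(ω) be a measurable random transition model with p*_{s,a}(ω) ∈ Δ^S for each state–action pair (s,a); for each (s,a) define g_{s,a} and K_{s,a} from the random vector X_{s,a} = p*_{s,a} at level ζ, assuming each supremum defining g_{s,a}(v) is attained. Let P be an ambiguity set, π̂ a deterministic policy, and v̂ ∈ ℝ^S such that v̂ = T̂_P^{π̂} v̂, and suppose that for every state s and action a, K_{s,a}(v̂) ∩ P_{s,a} ≠ ∅. Assume the event E = {ω : v̂ ≤ v_{P*(ω)}^{π̂} componentwise} is measurable. Then μ[E] ≥ 1 − δ; in particular, for any initial distribution p₀ ∈ Δ^S, μ[{ω : p₀ᵀ v̂ ≤ p₀ᵀ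 v_{P*(ω)}^{π̂}}] ≥ 1 − δ. (Theorem 6: safety of the RSVF return estimate upon termination.) -/
open MeasureTheory

noncomputable section

/-- Comparison lemma: if `v ≤ T v` pointwise for a monotone γ-contraction Bellman operator
with fixed point `w`, then `v ≤ w` pointwise. -/
lemma bellman_le_fixed {S A : ℕ} (hS : 0 < S) {r : Fin S → Fin A → ℝ} {γ : ℝ}
    (hγ0 : 0 ≤ γ) (hγ1 : γ < 1) {P : Fin S → Fin A → Fin S → ℝ}
    (hP : ∀ s a, P s a ∈ stdSimplex ℝ (Fin S)) {π : Fin S → Fin A}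
    {v w : Fin S → ℝ} (hv : ∀ s, v s ≤ Bellman r γ P π v s)
    (hw : w = Bellman r γ P π w) : ∀ s, v s ≤ w s := by
  have : NeZero S := ⟨hS.ne'⟩
  have hne : (Finset.univ : Finset (Fin S)).Nonempty := Finset.univ_nonempty
  set e : Fin S → ℝ := fun s => v s - w s with he
  set M := Finset.univ.sup' hne e with hM
  have key : ∀ s, e s ≤ γ * M := by
    intro s
    have hws : w s = r s (π s) + γ * dot (P s (π s)) w := congrFun hw s
    have h1 : e s ≤ γ * (dot (P s (π s)) v - dot (P s (π s)) w) := by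
      have := hv s
      simp only [Bellman] at this
      simp only [he]
      nlinarith [this, hws]
    have h2 : dot (P s (π s)) v - dot (P s (π s)) w = ∑ j, P s (π s) j * e j := by
      simp [dot, he, ← Finset.sum_sub_distrib, mul_sub]
    have h3 : ∑ j, P s (π s) j * e j ≤ ∑ j, P s (π s) j * M :=
      Finset.sum_le_sum fun j _ =>
        mul_le_mul_of_nonneg_left (Finset.le_sup' e (Finset.mem_univ j))
          ((hP s (π s)).1 j)
    have h4 : ∑ j, P s (π s) j * M = M := by
      rw [← Finset.sum_mul, (hP s (π s)).2, one_mul]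
    calc e s ≤ γ * (dot (P s (π s)) v - dot (P s (π s)) w) := h1
      _ = γ * ∑ j, P s (π s) j * e j := by rw [h2]
      _ ≤ γ * M := by rw [← h4]; exact mul_le_mul_of_nonneg_left h3 hγ0
  have hMle : M ≤ γ * M := by
    obtain ⟨s₀, _, hs₀⟩ := Finset.exists_mem_eq_sup' hne e
    have h := key s₀; rwa [← hs₀] at h
  have hM0 : M ≤ 0 := by nlinarith
  intro s
  have : e s ≤ M := Finset.le_sup' e (Finset.mem_univ s)
  have := this.trans hM0
  simp only [he] at this
  linarith

/-- Theorem 6: safety of the RSVF return estimate upon termination.  If the robust value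
function `v̂` of policy `π̂` satisfies the termination condition
`K_{s,a}(v̂) ∩ P_{s,a} ≠ ∅` for every state and action, then `v̂` is a componentwise lower
bound on the true value function of `π̂` with probability at least `1 − δ`; in particular the
return estimate `p₀ᵀ v̂` is safe. -/
theorem rsvf_safety
    {S A : ℕ} (hS : 0 < S) (hA : 0 < A)
    (r : Fin S → Fin A → ℝ) (γ : ℝ) (hγ0 : 0 ≤ γ) (hγ1 : γ < 1)
    (δ : ℝ) (hδ0 : 0 < δ) (hδ1 : δ < 1)
    (ζ : ℝ) (hζ : ζ = 1 - δ / (S * A))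
    {Ω : Type*} [MeasurableSpace Ω] (μ : Measure Ω) [IsProbabilityMeasure μ]
    -- the random true transition model
    (Pstar : Ω → Fin S → Fin A → Fin S → ℝ)
    (hPstarMeas : ∀ s a, Measurable fun ω => Pstar ω s a)
    (hPstarSimplex : ∀ ω s a, Pstar ω s a ∈ stdSimplex ℝ (Fin S))
    -- the suprema defining g_{s,a}(v) are attained
    (hattain : ∀ s a (v : Fin S → ℝ), ENNReal.ofReal ζ ≤
      μ {ω | gVal μ (fun ω => Pstar ω s a) ζ v ≤ dot (Pstar ω s a) v})
    -- the ambiguity set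
    (Amb : Fin S → Fin A → Set (Fin S → ℝ))
    (hAmbSub : ∀ s a, Amb s a ⊆ stdSimplex ℝ (Fin S))
    (hAmbNe : ∀ s a, (Amb s a).Nonempty)
    (hAmbCpt : ∀ s a, IsCompact (Amb s a))
    -- the policy and its robust value function
    (πhat : Fin S → Fin A) (vhat : Fin S → ℝ)
    (hvhat : vhat = robustBellman r γ Amb πhat vhat)
    -- the RSVF termination condition
    (hterm : ∀ s a, (Ksafe μ (fun ω => Pstar ω s a) ζ vhat ∩ Amb s a).Nonempty)
    -- true value function of `π̂` under the realized true model
    (vT : Ω → Fin S → ℝ)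
    (hvT : ∀ ω, vT ω = Bellman r γ (Pstar ω) πhat (vT ω))
    -- the safety event is measurable
    (hEMeas : MeasurableSet {ω | ∀ s, vhat s ≤ vT ω s})
    -- initial distribution
    (p0 : Fin S → ℝ) (hp0 : p0 ∈ stdSimplex ℝ (Fin S)) :
    ENNReal.ofReal (1 - δ) ≤ μ {ω | ∀ s, vhat s ≤ vT ω s} ∧
    ENNReal.ofReal (1 - δ) ≤ μ {ω | dot p0 vhat ≤ dot p0 (vT ω)} := by
  classical
  -- basic facts about ζ and δ
  have hSR : (0:ℝ) < S := by exact_mod_cast hS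
  have hAR : (0:ℝ) < A := by exact_mod_cast hA
  have hSA : (0:ℝ) < (S:ℝ) * A := by positivity
  have h1S : (1:ℝ) ≤ S := by exact_mod_cast hS
  have h1A : (1:ℝ) ≤ A := by exact_mod_cast hA
  have hζ0 : 0 ≤ ζ := by
    rw [hζ]
    have h1 : δ / ((S:ℝ) * A) ≤ δ := by
      rw [div_le_iff₀ hSA]
      nlinarith [mul_nonneg hδ0.le (by nlinarith : (0:ℝ) ≤ (S:ℝ) * A - 1)]
    linarith
  -- the good events
  set B : Fin S → Set Ω := fun s =>
    {ω | gVal μ (fun ω => Pstar ω s (πhat s)) ζ vhat ≤ dot (Pstar ω s (πhat s)) vhat}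
    with hB
  have hBmeas : ∀ s, MeasurableSet (B s) := by
    intro s
    apply measurableSet_le measurable_const
    apply Finset.measurable_sum
    intro j _
    exact ((measurable_pi_apply j).comp (hPstarMeas s (πhat s))).mul_const _
  have hBζ : ∀ s, ENNReal.ofReal ζ ≤ μ (B s) := fun s => hattain s (πhat s) vhat
  -- the good event implies safety
  have hsub : (⋂ s, B s) ⊆ {ω | ∀ s, vhat s ≤ vT ω s} := by
    intro ω hω
    have hv : ∀ s, vhat s ≤ Bellman r γ (Pstar ω) πhat vhat s := by
      intro s
      obtain ⟨p, ⟨⟨hpsimp, hpg⟩, hpA⟩⟩ := hterm s (πhat s)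
      have hcont : Continuous fun q : Fin S → ℝ => dot q vhat := by
        apply continuous_finset_sum
        exact fun j _ => (continuous_apply j).mul continuous_const
      have hinf : sInf ((fun p => dot p vhat) '' Amb s (πhat s)) ≤ dot p vhat :=
        csInf_le (((hAmbCpt s (πhat s)).image hcont).bddBelow)
          (Set.mem_image_of_mem _ hpA)
      have hgω : gVal μ (fun ω => Pstar ω s (πhat s)) ζ vhat
          ≤ dot (Pstar ω s (πhat s)) vhat := Set.mem_iInter.mp hω s
      have hchain : sInf ((fun p => dot p vhat) '' Amb s (πhat s))
          ≤ dot (Pstar ω s (πhat s)) vhat := le_trans hinf (le_trans hpg hgω)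
      calc vhat s = r s (πhat s) + γ * sInf ((fun p => dot p vhat) '' Amb s (πhat s)) :=
            congrFun hvhat s
        _ ≤ r s (πhat s) + γ * dot (Pstar ω s (πhat s)) vhat := by
            have := mul_le_mul_of_nonneg_left hchain hγ0; linarith
        _ = Bellman r γ (Pstar ω) πhat vhat s := rfl
    exact bellman_le_fixed hS hγ0 hγ1 (hPstarSimplex ω) hv (hvT ω)
  -- union bound
  have hcompl : μ (⋂ s, B s)ᶜ ≤ ENNReal.ofReal δ := by
    have h1 : μ (⋂ s, B s)ᶜ ≤ ∑ s, μ (B s)ᶜ := by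
      rw [Set.compl_iInter]
      exact measure_iUnion_fintype_le _ _
    have h2 : ∀ s, μ (B s)ᶜ ≤ ENNReal.ofReal (1 - ζ) := by
      intro s
      rw [prob_compl_eq_one_sub (hBmeas s), ENNReal.ofReal_sub _ hζ0,
        ENNReal.ofReal_one]
      exact tsub_le_tsub_left (hBζ s) 1
    have h3 : (∑ s, μ (B s)ᶜ) ≤ ∑ _s : Fin S, ENNReal.ofReal (1 - ζ) :=
      Finset.sum_le_sum fun s _ => h2 s
    have h4 : (∑ _s : Fin S, ENNReal.ofReal (1 - ζ)) = ENNReal.ofReal (S * (1 - ζ)) := by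
      rw [Finset.sum_const, Finset.card_univ, Fintype.card_fin, nsmul_eq_mul,
        ← ENNReal.ofReal_natCast S, ← ENNReal.ofReal_mul (by positivity)]
    have h5 : (S:ℝ) * (1 - ζ) ≤ δ := by
      rw [hζ]
      have : (S:ℝ) * (δ / ((S:ℝ) * A)) = δ / A := by
        field_simp
      rw [show (1:ℝ) - (1 - δ / ((S:ℝ)*A)) = δ / ((S:ℝ)*A) by ring, this]
      rw [div_le_iff₀ hAR]
      nlinarith [mul_nonneg hδ0.le (by linarith : (0:ℝ) ≤ (A:ℝ) - 1)]
    calc μ (⋂ s, B s)ᶜ ≤ ∑ s, μ (B s)ᶜ := h1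
      _ ≤ ENNReal.ofReal (S * (1 - ζ)) := h4 ▸ h3
      _ ≤ ENNReal.ofReal δ := ENNReal.ofReal_le_ofReal h5
  have hcap : ENNReal.ofReal (1 - δ) ≤ μ (⋂ s, B s) := by
    have hmeasB : MeasurableSet (⋂ s, B s) := MeasurableSet.iInter fun s => hBmeas s
    have : μ (⋂ s, B s) = 1 - μ (⋂ s, B s)ᶜ := by
      rw [← prob_compl_eq_one_sub hmeasB.compl, compl_compl]
    rw [this, ENNReal.ofReal_sub _ hδ0.le, ENNReal.ofReal_one]
    exact tsub_le_tsub_left hcompl 1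
  have first : ENNReal.ofReal (1 - δ) ≤ μ {ω | ∀ s, vhat s ≤ vT ω s} :=
    hcap.trans (measure_mono hsub)
  refine ⟨first, first.trans (measure_mono ?_)⟩
  intro ω hω
  simp only [Set.mem_setOf_eq] at hω ⊢
  exact Finset.sum_le_sum fun j _ => mul_le_mul_of_nonneg_left (hω j) (hp0.1 j)
end
end

section
/- Let v ∈ ℝ^S be monotone nonincreasing (v₁ ≥ v₂ ≥ … ≥ v_S), let p̄ ∈ Δ^S, and let ψ ≥ 0. Then the minimum of ⟨v, p⟩ over the L1 ball intersected with the simplex, { p ∈ Δ^S : ‖p − p̄‖₁ ≤ ψ }, equals the minimum of ⟨v, p⟩ over the relaxed set { p ∈ Δ^S : for every k ∈ {1,…,S+1}, ∑_{j ≥ k} (p_j − p̄_j) − ∑_{j < k} (p_j − p̄_j) ≤ ψ }. (Lemma B.5: for monotone value functions, the exponential family of L1 constraints can be replaced by S+1 linear constraints without changing the optimal robust value.) -/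
noncomputable section

/-!
Reading `p` through its tail deviations `k ↦ ∑_{j ≥ k} (p_j - p̄_j)`, the `k`-th relaxed constraint
says that this deviation is at most `ψ/2`; together with `p ≥ 0` it is also at most
`∑_{j < k} p̄_j`. The distribution `q` whose tail deviations are exactly
`min (ψ/2) (∑_{j < k} p̄_j)` (move mass `ψ/2` from the first indices to the last one) lies in the
`L1` ball, and its tails dominate those of every relaxed `p`. Since `v` is nonincreasing, Abel
summation turns this stochastic dominance into `⟨v, q⟩ ≤ ⟨v, p⟩`, so `q` minimizes over both sets.
-/

open Finset

theorem sum_abs_eq_two_mul_of_forall_ne_nonpos {ι : Type*} [Fintype ι] {d : ι → ℝ} (i : ι)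
    (hsum : ∑ j, d j = 0) (hd : ∀ j ≠ i, d j ≤ 0) : ∑ j, |d j| = 2 * d i := by
  classical
  rw [← add_sum_erase _ _ (mem_univ i)] at hsum ⊢
  have hrest : ∑ j ∈ univ.erase i, |d j| = -∑ j ∈ univ.erase i, d j := by
    rw [← sum_neg_distrib]
    exact sum_congr rfl fun j hj => abs_of_nonpos (hd j (ne_of_mem_erase hj))
  have hi : 0 ≤ d i := by
    have := sum_nonpos fun j hj => hd j (ne_of_mem_erase (s := univ) hj)
    linarith
  rw [hrest, abs_of_nonneg hi]
  linarith

section TailSums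

variable {S : ℕ}

def tailSum (f : Fin S → ℝ) (k : ℕ) : ℝ :=
  ∑ j ∈ univ.filter (fun j : Fin S => k ≤ (j : ℕ)), f j

def headSum (f : Fin S → ℝ) (k : ℕ) : ℝ :=
  ∑ j ∈ univ.filter (fun j : Fin S => (j : ℕ) < k), f j

theorem headSum_add_tailSum (f : Fin S → ℝ) (k : ℕ) :
    headSum f k + tailSum f k = ∑ j, f j := by
  simp only [headSum, tailSum, ← not_le]
  rw [add_comm]
  exact sum_filter_add_sum_filter_not _ _ _

@[simp]
theorem headSum_zero (f : Fin S → ℝ) : headSum f 0 = 0 := by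
  simp [headSum]

@[simp]
theorem tailSum_zero (f : Fin S → ℝ) : tailSum f 0 = ∑ j, f j := by
  simp [tailSum]

theorem tailSum_of_le (f : Fin S → ℝ) {k : ℕ} (hk : S ≤ k) : tailSum f k = 0 := by
  rw [tailSum, filter_false_of_mem fun j _ => by omega, sum_empty]

theorem tailSum_of_lt (f : Fin S → ℝ) {k : ℕ} (hk : k < S) :
    tailSum f k = f ⟨k, hk⟩ + tailSum f (k + 1) := by
  rw [tailSum, tailSum, ← sum_insert (by simp)]
  congr 1
  ext j
  simp only [mem_filter, mem_univ, true_and, mem_insert, Fin.ext_iff]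
  omega

theorem headSum_succ (f : Fin S → ℝ) {k : ℕ} (hk : k < S) :
    headSum f (k + 1) = headSum f k + f ⟨k, hk⟩ := by
  have h := headSum_add_tailSum f k
  have hsucc := headSum_add_tailSum f (k + 1)
  rw [tailSum_of_lt f hk] at h
  linarith

theorem tailSum_sub (f g : Fin S → ℝ) (k : ℕ) : tailSum (f - g) k = tailSum f k - tailSum g k :=
  sum_sub_distrib ..

theorem headSum_nonneg {f : Fin S → ℝ} (hf : ∀ j, 0 ≤ f j) (k : ℕ) : 0 ≤ headSum f k :=
  sum_nonneg fun j _ => hf j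

theorem tailSum_sub_headSum_le_sum_abs (f : Fin S → ℝ) (k : ℕ) :
    tailSum f k - headSum f k ≤ ∑ j, |f j| := by
  have htail : tailSum f k ≤ tailSum (fun j => |f j|) k := sum_le_sum fun j _ => le_abs_self _
  have hhead : -headSum f k ≤ headSum (fun j => |f j|) k := by
    rw [headSum, ← sum_neg_distrib]
    exact sum_le_sum fun j _ => neg_le_abs _
  linarith [headSum_add_tailSum (fun j => |f j|) k]

theorem tailSum_telescope (g : ℕ → ℝ) {k : ℕ} (hk : k ≤ S) :
    tailSum (fun j : Fin S => g j - g (j + 1)) k = g k - g S := by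
  induction hk using Nat.decreasingInduction with
  | self => rw [tailSum_of_le _ le_rfl, sub_self]
  | of_succ k hk ih => rw [tailSum_of_lt _ hk, ih]; ring

theorem tailSum_mul_le {v d : Fin S → ℝ} (hv : Antitone v) (hd : ∀ k, 0 ≤ tailSum d k)
    {k : ℕ} (hk : k ≤ S) {c : ℝ} (hc : ∀ j : Fin S, k ≤ j → v j ≤ c) :
    tailSum (v * d) k ≤ c * tailSum d k := by
  induction hk using Nat.decreasingInduction generalizing c with
  | self => simp [tailSum_of_le]
  | of_succ k hk ih =>
    set vk := v ⟨k, hk⟩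
    calc tailSum (v * d) k = vk * d ⟨k, hk⟩ + tailSum (v * d) (k + 1) := tailSum_of_lt _ hk
      _ ≤ vk * d ⟨k, hk⟩ + vk * tailSum d (k + 1) := by
        gcongr
        exact ih fun j hj => hv (Fin.le_def.mpr (by simp; omega))
      _ = vk * tailSum d k := by rw [tailSum_of_lt d hk]; ring
      _ ≤ c * tailSum d k := mul_le_mul_of_nonneg_right (hc _ le_rfl) (hd k)

theorem sum_mul_le_sum_mul_of_tailSum_le {v p q : Fin S → ℝ} (hv : Antitone v)
    (hpq : ∀ k, tailSum p k ≤ tailSum q k) (htot : ∑ j, p j = ∑ j, q j) :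
    ∑ j, v j * q j ≤ ∑ j, v j * p j := by
  obtain ⟨c, hc⟩ := (Set.finite_range v).bddAbove
  have h := tailSum_mul_le (d := q - p) hv (fun k => by linarith [tailSum_sub q p k, hpq k])
    (Nat.zero_le S) (c := c) fun j _ => hc ⟨j, rfl⟩
  simp only [tailSum_zero, Pi.mul_apply, Pi.sub_apply, mul_sub, sum_sub_distrib, htot,
    sub_self, mul_zero] at h
  linarith

end TailSums

section WorstCase

variable {S : ℕ} (pbar : Fin S → ℝ) (ψ : ℝ)

def worstTail (k : ℕ) : ℝ :=
  if k < S then min (ψ / 2) (headSum pbar k) else 0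

def worstCase : Fin S → ℝ :=
  fun j => pbar j + (worstTail pbar ψ j - worstTail pbar ψ (j + 1))

variable {pbar ψ}

theorem worstTail_of_le {k : ℕ} (hk : S ≤ k) : worstTail pbar ψ k = 0 :=
  if_neg (not_lt.mpr hk)

theorem worstTail_zero (hψ : 0 ≤ ψ) : worstTail pbar ψ 0 = 0 := by
  unfold worstTail
  split_ifs
  · rw [headSum_zero]; exact min_eq_right (by linarith)
  · rfl

theorem worstTail_nonneg (hpbar : ∀ j, 0 ≤ pbar j) (hψ : 0 ≤ ψ) (k : ℕ) :
    0 ≤ worstTail pbar ψ k := by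
  unfold worstTail
  split_ifs
  · exact le_min (by linarith) (headSum_nonneg hpbar k)
  · rfl

theorem worstTail_le (hψ : 0 ≤ ψ) (k : ℕ) : worstTail pbar ψ k ≤ ψ / 2 := by
  unfold worstTail
  split_ifs
  · exact min_le_left _ _
  · linarith

theorem worstTail_le_succ (hpbar : ∀ j, 0 ≤ pbar j) {k : ℕ} (hk : k + 1 < S) :
    worstTail pbar ψ k ≤ worstTail pbar ψ (k + 1) := by
  rw [worstTail, worstTail, if_pos hk, if_pos (by omega), headSum_succ pbar (by omega)]
  gcongr
  linarith [hpbar ⟨k, by omega⟩]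

theorem worstTail_succ_le (hpbar : ∀ j, 0 ≤ pbar j) (hψ : 0 ≤ ψ) {k : ℕ} (hk : k < S) :
    worstTail pbar ψ (k + 1) ≤ worstTail pbar ψ k + pbar ⟨k, hk⟩ := by
  by_cases hk' : k + 1 < S
  · rw [worstTail, worstTail, if_pos hk', if_pos hk, headSum_succ pbar hk, ← min_add_add_right]
    exact min_le_min (by linarith [hpbar ⟨k, hk⟩]) le_rfl
  · rw [worstTail_of_le (not_lt.mp hk')]
    linarith [worstTail_nonneg hpbar hψ k, hpbar ⟨k, hk⟩]

theorem tailSum_worstCase_sub (k : ℕ) :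
    tailSum (worstCase pbar ψ - pbar) k = worstTail pbar ψ k := by
  rcases le_or_gt k S with hk | hk
  · have hdev : worstCase pbar ψ - pbar =
        fun j : Fin S => worstTail pbar ψ j - worstTail pbar ψ (j + 1) := by
      ext j
      simp [worstCase]
    rw [hdev, tailSum_telescope _ hk, worstTail_of_le le_rfl, sub_zero]
  · rw [tailSum_of_le _ hk.le, worstTail_of_le hk.le]

theorem worstCase_mem_stdSimplex (hpbar : pbar ∈ stdSimplex ℝ (Fin S)) (hψ : 0 ≤ ψ) :
    worstCase pbar ψ ∈ stdSimplex ℝ (Fin S) := by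
  refine ⟨fun j => ?_, ?_⟩
  · have h := worstTail_succ_le hpbar.1 hψ j.isLt
    simp only [Fin.eta] at h
    simp only [worstCase]
    linarith
  · have h := tailSum_worstCase_sub (pbar := pbar) (ψ := ψ) 0
    rw [tailSum_sub, tailSum_zero, tailSum_zero, hpbar.2, worstTail_zero hψ] at h
    linarith

theorem sum_abs_worstCase_sub_le (hpbar : pbar ∈ stdSimplex ℝ (Fin S)) (hψ : 0 ≤ ψ) :
    ∑ j, |worstCase pbar ψ j - pbar j| ≤ ψ := by
  have hS : 0 < S := Nat.pos_of_ne_zero fun h => by subst h; simpa using hpbar.2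
  have hsum : ∑ j, (worstCase pbar ψ - pbar) j = 0 := by
    rw [← tailSum_zero, tailSum_worstCase_sub, worstTail_zero hψ]
  have hneg : ∀ j ≠ (⟨S - 1, by omega⟩ : Fin S), (worstCase pbar ψ - pbar) j ≤ 0 := by
    intro j hj
    have hj : (j : ℕ) + 1 < S := by
      rw [Ne, Fin.ext_iff] at hj
      have := j.isLt
      simp only at hj
      omega
    simp only [Pi.sub_apply, worstCase, add_sub_cancel_left]
    linarith [worstTail_le_succ (ψ := ψ) hpbar.1 hj]
  have hlast := sum_abs_eq_two_mul_of_forall_ne_nonpos _ hsum hneg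
  simp only [Pi.sub_apply] at hlast
  rw [hlast]
  simp only [worstCase, add_sub_cancel_left, Nat.sub_add_cancel hS]
  rw [worstTail_of_le le_rfl]
  linarith [worstTail_le (pbar := pbar) hψ (S - 1)]

theorem tailSum_sub_le_worstTail {p : Fin S → ℝ} (hp : p ∈ stdSimplex ℝ (Fin S))
    (hpbar : pbar ∈ stdSimplex ℝ (Fin S))
    (hrelax : ∀ k : Fin (S + 1), tailSum (p - pbar) k - headSum (p - pbar) k ≤ ψ) (k : ℕ) :
    tailSum (p - pbar) k ≤ worstTail pbar ψ k := by
  unfold worstTail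
  split_ifs with hk
  · have htot : headSum (p - pbar) k + tailSum (p - pbar) k = 0 := by
      rw [headSum_add_tailSum]
      simp [sum_sub_distrib, hp.2, hpbar.2]
    have hhead : headSum (p - pbar) k = headSum p k - headSum pbar k := sum_sub_distrib ..
    refine le_min ?_ ?_
    · linarith [hrelax ⟨k, by omega⟩]
    · linarith [headSum_nonneg hp.1 k]
  · rw [tailSum_of_le _ (not_lt.mp hk)]

theorem sum_mul_worstCase_le {v p : Fin S → ℝ} (hv : Antitone v) (hp : p ∈ stdSimplex ℝ (Fin S))
    (hpbar : pbar ∈ stdSimplex ℝ (Fin S)) (hψ : 0 ≤ ψ)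
    (hrelax : ∀ k : Fin (S + 1), tailSum (p - pbar) k - headSum (p - pbar) k ≤ ψ) :
    ∑ j, v j * worstCase pbar ψ j ≤ ∑ j, v j * p j := by
  refine sum_mul_le_sum_mul_of_tailSum_le hv (fun k => ?_)
    (by rw [hp.2, (worstCase_mem_stdSimplex hpbar hψ).2])
  have h := tailSum_sub_le_worstTail hp hpbar hrelax k
  rw [← tailSum_worstCase_sub, tailSum_sub, tailSum_sub] at h
  linarith

end WorstCase

theorem csInf_image_eq_of_subset_of_forall_le {α β : Type*} [ConditionallyCompleteLattice β]
    {f : α → β} {A B : Set α} (hAB : A ⊆ B) {a : α} (ha : a ∈ A) (hmin : ∀ b ∈ B, f a ≤ f b) :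
    sInf (f '' A) = sInf (f '' B) := by
  have hB : IsLeast (f '' B) (f a) :=
    ⟨Set.mem_image_of_mem f (hAB ha), Set.forall_mem_image.2 hmin⟩
  have hA : IsLeast (f '' A) (f a) :=
    ⟨Set.mem_image_of_mem f ha, fun _ hx => hB.2 (Set.image_mono hAB hx)⟩
  rw [hA.csInf_eq, hB.csInf_eq]

/-- Lemma B.5: for a monotone nonincreasing value function `v`, minimizing `⟨v, p⟩` over the
`L1` ball of radius `ψ` around `p̄` (intersected with the simplex) gives the same value as
minimizing over the relaxed set defined by the `S+1` linear constraints
`∑_{j ≥ k} (p_j − p̄_j) − ∑_{j < k} (p_j − p̄_j) ≤ ψ`, `k = 1,…,S+1`. -/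
theorem monotone_l1_relaxation
    {S : ℕ} (v : Fin S → ℝ) (hv : ∀ i j : Fin S, i ≤ j → v j ≤ v i)
    (pbar : Fin S → ℝ) (hpbar : pbar ∈ stdSimplex ℝ (Fin S))
    (ψ : ℝ) (hψ : 0 ≤ ψ) :
    sInf ((fun p => ∑ j, v j * p j) ''
        {p ∈ stdSimplex ℝ (Fin S) | ∑ j, |p j - pbar j| ≤ ψ}) =
    sInf ((fun p => ∑ j, v j * p j) ''
        {p ∈ stdSimplex ℝ (Fin S) | ∀ k : Fin (S + 1),
          (∑ j ∈ Finset.univ.filter (fun j : Fin S => (k : ℕ) ≤ (j : ℕ)), (p j - pbar j)) -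
          (∑ j ∈ Finset.univ.filter (fun j : Fin S => (j : ℕ) < (k : ℕ)), (p j - pbar j))
            ≤ ψ}) := by
  refine csInf_image_eq_of_subset_of_forall_le
    (fun p hp => ⟨hp.1, fun k => (tailSum_sub_headSum_le_sum_abs (p - pbar) k).trans hp.2⟩)
    (a := worstCase pbar ψ)
    ⟨worstCase_mem_stdSimplex hpbar hψ, sum_abs_worstCase_sub_le hpbar hψ⟩
    fun p hp => sum_mul_worstCase_le hv hp.1 hpbar hψ hp.2
end
end
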